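/- arXiv:0802.2128 — 3 statements merged into one kernel-verified Lean document; each statement's English description precedes it below -/
import Mathlib

section
/- Let X be a double suit over base set A and dimension N. Then X is perfect if and only if X +_∅ ¬X = 1. -/
/-!
A member of `X⁺` and a member of `X⁻` are disjoint, since their intersection lies in
`X⁺ ∩ X⁻ = {∅}`. So if the full team splits as `V ⊔ Vᶜ` with `V ∈ X⁺` and `Vᶜ ∈ X⁻`, which is
what `X +_∅ ¬X = 1` provides, downward closure forces `X⁺ = 𝒫 V` and `X⁻ = 𝒫 Vᶜ`.
Conversely, every team `W` splits as `(W ∩ V) ⊔ (W \ V)`.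
-/

/-- A team: a set of valuations `Fin N → A`. -/
abbrev Team (A : Type*) (N : ℕ) := Set (Fin N → A)

/-- A pair of collections of teams. -/
abbrev TPair (A : Type*) (N : ℕ) := Set (Team A N) × Set (Team A N)

/-- A suit: a nonempty collection of teams closed under subsets. -/
def IsSuit {A : Type*} {N : ℕ} (S : Set (Team A N)) : Prop :=
  S.Nonempty ∧ ∀ ⦃V V' : Team A N⦄, V ∈ S → V' ⊆ V → V' ∈ S

/-- A double suit: a pair of suits whose intersection is `{∅}`. -/
def IsDoubleSuit {A : Type*} {N : ℕ} (X : TPair A N) : Prop :=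
  IsSuit X.1 ∧ IsSuit X.2 ∧ X.1 ∩ X.2 = {∅}

/-- The pair `(𝒫(V), 𝒫(^N A \ V))`. -/
def perfPair {A : Type*} {N : ℕ} (V : Team A N) : TPair A N :=
  (Set.powerset V, Set.powerset Vᶜ)

/-- A pair is perfect if it equals `(𝒫(V), 𝒫(^N A \ V))` for some team `V`. -/
def IsPerfect {A : Type*} {N : ℕ} (X : TPair A N) : Prop :=
  ∃ V : Team A N, X = perfPair V

/-- The constant `0 = ({∅}, 𝒫(^N A))`. -/
def zeroP (A : Type*) (N : ℕ) : TPair A N := ({∅}, Set.univ)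

/-- The constant `1 = (𝒫(^N A), {∅})`. -/
def oneP (A : Type*) (N : ℕ) : TPair A N := (Set.univ, {∅})

/-- The diagonal element `D_ij`. -/
def diagP (A : Type*) {N : ℕ} (i j : Fin N) : TPair A N :=
  (Set.powerset {a : Fin N → A | a i = a j}, Set.powerset {a : Fin N → A | a i ≠ a j})

/-- Negation: `¬(X⁺, X⁻) = (X⁻, X⁺)`. -/
def negP {A : Type*} {N : ℕ} (X : TPair A N) : TPair A N := (X.2, X.1)

/-- The operation `+_∅`. -/
def addE {A : Type*} {N : ℕ} (X Y : TPair A N) : TPair A N :=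
  ({V | ∃ V₁ ∈ X.1, ∃ V₂ ∈ Y.1, Disjoint V₁ V₂ ∧ V₁ ∪ V₂ = V}, X.2 ∩ Y.2)

/-- The operation `·_∅`. -/
def mulE {A : Type*} {N : ℕ} (X Y : TPair A N) : TPair A N :=
  (X.1 ∩ Y.1, {W | ∃ W₁ ∈ X.2, ∃ W₂ ∈ Y.2, Disjoint W₁ W₂ ∧ W₁ ∪ W₂ = W})

/-- The `n`-variation of `V` by `f`: `V(n:f) = {a(n:f(a)) : a ∈ V}`. -/
def varF {A : Type*} {N : ℕ} (V : Team A N) (n : Fin N) (f : (Fin N → A) → A) : Team A N :=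
  (fun a => Function.update a n (f a)) '' V

/-- `V(n:A) = {a(n:b) : a ∈ V, b ∈ A}`. -/
def varAll {A : Type*} {N : ℕ} (V : Team A N) (n : Fin N) : Team A N :=
  {c | ∃ a ∈ V, ∃ b : A, c = Function.update a n b}

/-- The cylindrification `C_{n,∅}` (every `f : V → A` is independent of `∅`). -/
def cylE {A : Type*} {N : ℕ} (n : Fin N) (X : TPair A N) : TPair A N :=
  ({V | ∃ f : (Fin N → A) → A, varF V n f ∈ X.1}, {W | varAll W n ∈ X.2})

section

variable {A : Type*} {N : ℕ}

theorem addE_perfPair_negP (V : Team A N) : addE (perfPair V) (negP (perfPair V)) = oneP A N := by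
  refine Prod.ext (Set.eq_univ_of_forall fun W => ?_) ?_
  · exact ⟨W ∩ V, Set.inter_subset_right, W \ V, Set.sdiff_subset_compl W V,
      Set.disjoint_sdiff_inter.symm, Set.inter_union_sdiff W V⟩
  · change 𝒫 Vᶜ ∩ 𝒫 V = {∅}
    rw [← Set.powerset_inter, Set.compl_inter_self, Set.powerset_empty]

theorem exists_compl_mem_of_univ_mem_addE {X Y : TPair A N} (h : Set.univ ∈ (addE X Y).1) :
    ∃ V ∈ X.1, Vᶜ ∈ Y.1 := by
  obtain ⟨V₁, hV₁, V₂, hV₂, hdisj, hunion⟩ := h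
  have hcompl : IsCompl V₁ V₂ := ⟨hdisj, codisjoint_iff.mpr hunion⟩
  exact ⟨V₁, hV₁, hcompl.compl_eq ▸ hV₂⟩

namespace IsDoubleSuit

variable {X : TPair A N}

theorem disjoint_of_mem (hX : IsDoubleSuit X) {U W : Team A N} (hU : U ∈ X.1) (hW : W ∈ X.2) :
    Disjoint U W := by
  have hmem : U ∩ W ∈ X.1 ∩ X.2 :=
    ⟨hX.1.2 hU Set.inter_subset_left, hX.2.1.2 hW Set.inter_subset_right⟩
  rw [hX.2.2] at hmem
  exact Set.disjoint_iff_inter_eq_empty.mpr hmem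

theorem eq_perfPair (hX : IsDoubleSuit X) {V : Team A N} (hV : V ∈ X.1) (hVc : Vᶜ ∈ X.2) :
    X = perfPair V := by
  refine Prod.ext (Set.ext fun U => ⟨fun hU => ?_, fun hU => hX.1.2 hV hU⟩)
    (Set.ext fun W => ⟨fun hW => ?_, fun hW => hX.2.1.2 hVc hW⟩)
  · exact Set.disjoint_compl_right_iff_subset.mp (hX.disjoint_of_mem hU hVc)
  · exact Set.subset_compl_iff_disjoint_left.mpr (hX.disjoint_of_mem hV hW)

end IsDoubleSuit

end

/-- A double suit `X` is perfect iff `X +_∅ ¬X = 1`. -/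
theorem perfect_iff_addE_neg_eq_one {A : Type*} {N : ℕ} (X : TPair A N)
    (hX : IsDoubleSuit X) :
    IsPerfect X ↔ addE X (negP X) = oneP A N := by
  constructor
  · rintro ⟨V, rfl⟩
    exact addE_perfPair_negP V
  · intro h
    have huniv : Set.univ ∈ (addE X (negP X)).1 := by
      rw [h]
      exact Set.mem_univ _
    obtain ⟨V, hV, hVc⟩ := exists_compl_mem_of_univ_mem_addE huniv
    exact ⟨V, hX.eq_perfPair hV hVc⟩
end

section
/- The collection of pairs of suits over base set A and dimension N contains the constants 0, 1, and D_ij for all i, j < N, and is closed under the operations ¬, +_J, ·_J, and C_{n,J} for all J ⊆ Fin N and n < N; that is, if X and Y are pairs of suits, then so are ¬X, X +_J Y, X ·_J Y, and C_{n,J}(X). -/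
/-- A pair of suits. -/
def IsSuitPair {A : Type*} {N : ℕ} (X : TPair A N) : Prop :=
  IsSuit X.1 ∧ IsSuit X.2

/-- `a ≈_J b` : the valuations `a` and `b` agree outside of `J`. -/
def AgreeOutside {A : Type*} {N : ℕ} (J : Set (Fin N)) (a b : Fin N → A) : Prop :=
  ∀ i ∉ J, a i = b i

/-- `V = V₁ ∪_J V₂` : `V₁, V₂` form a `J`-saturated disjoint cover of `V`. -/
def CovJ {A : Type*} {N : ℕ} (J : Set (Fin N)) (V V₁ V₂ : Team A N) : Prop :=
  Disjoint V₁ V₂ ∧ V₁ ∪ V₂ = V ∧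
  (∀ a ∈ V₁, ∀ b ∈ V, AgreeOutside J a b → b ∈ V₁) ∧
  (∀ a ∈ V₂, ∀ b ∈ V, AgreeOutside J a b → b ∈ V₂)

/-- `f` is independent of `J` on `V`. -/
def IndepOn {A : Type*} {N : ℕ} (J : Set (Fin N)) (V : Team A N)
    (f : (Fin N → A) → A) : Prop :=
  ∀ a ∈ V, ∀ b ∈ V, AgreeOutside J a b → f a = f b

/-- The operation `+_J`. -/
def addJ {A : Type*} {N : ℕ} (J : Set (Fin N)) (X Y : TPair A N) : TPair A N :=
  ({V | ∃ V₁ ∈ X.1, ∃ V₂ ∈ Y.1, CovJ J V V₁ V₂}, X.2 ∩ Y.2)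

/-- The operation `·_J`. -/
def mulJ {A : Type*} {N : ℕ} (J : Set (Fin N)) (X Y : TPair A N) : TPair A N :=
  (X.1 ∩ Y.1, {W | ∃ W₁ ∈ X.2, ∃ W₂ ∈ Y.2, CovJ J W W₁ W₂})

/-- The cylindrification `C_{n,J}`. -/
def cylJ {A : Type*} {N : ℕ} (n : Fin N) (J : Set (Fin N)) (X : TPair A N) : TPair A N :=
  ({V | ∃ f : (Fin N → A) → A, IndepOn J V f ∧ varF V n f ∈ X.1}, {W | varAll W n ∈ X.2})

/-! Each component is a powerset, an intersection of suits, the preimage of a suit under a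
monotone map sending `∅` to `∅`, or a `J`-sum of suits; the last is closed under subteams because
a `J`-saturated cover of `V` restricts to one of any `V' ⊆ V`. -/

namespace IsSuit

variable {A : Type*} {N : ℕ} {S T : Set (Team A N)}

lemma empty_mem (hS : IsSuit S) : ∅ ∈ S := by
  obtain ⟨⟨V, hV⟩, hdown⟩ := hS
  exact hdown hV V.empty_subset

lemma inter (hS : IsSuit S) (hT : IsSuit T) : IsSuit (S ∩ T) :=
  ⟨⟨∅, hS.empty_mem, hT.empty_mem⟩, fun _ _ hV hsub => ⟨hS.2 hV.1 hsub, hT.2 hV.2 hsub⟩⟩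

lemma preimage {B : Type*} {M : ℕ} {F : Team B M → Team A N} (hF : Monotone F)
    (hF₀ : F ∅ = ∅) (hS : IsSuit S) : IsSuit (F ⁻¹' S) :=
  ⟨⟨∅, by simpa [hF₀] using hS.empty_mem⟩, fun _ _ hV hsub => hS.2 hV (hF hsub)⟩

end IsSuit

lemma isSuit_powerset {A : Type*} {N : ℕ} (T : Team A N) : IsSuit T.powerset :=
  ⟨⟨∅, T.empty_subset⟩, fun _ _ hV hsub => hsub.trans hV⟩

section CovJ

variable {A : Type*} {N : ℕ} {J : Set (Fin N)}

lemma covJ_empty : CovJ J (∅ : Team A N) ∅ ∅ :=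
  ⟨disjoint_bot_left, Set.empty_union ∅, fun _ h => h.elim, fun _ h => h.elim⟩

lemma CovJ.inter_left {V V₁ V₂ V' : Team A N} (h : CovJ J V V₁ V₂) (hsub : V' ⊆ V) :
    CovJ J V' (V' ∩ V₁) (V' ∩ V₂) := by
  obtain ⟨hdisj, hunion, hsat₁, hsat₂⟩ := h
  refine ⟨hdisj.mono Set.inter_subset_right Set.inter_subset_right, ?_, ?_, ?_⟩
  · rw [← Set.inter_union_distrib_left, hunion, Set.inter_eq_self_of_subset_left hsub]
  · rintro a ⟨-, ha⟩ b hb hab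
    exact ⟨hb, hsat₁ a ha b (hsub hb) hab⟩
  · rintro a ⟨-, ha⟩ b hb hab
    exact ⟨hb, hsat₂ a ha b (hsub hb) hab⟩

lemma isSuit_setOf_covJ {S T : Set (Team A N)} (hS : IsSuit S) (hT : IsSuit T) :
    IsSuit {V | ∃ V₁ ∈ S, ∃ V₂ ∈ T, CovJ J V V₁ V₂} := by
  refine ⟨⟨∅, ∅, hS.empty_mem, ∅, hT.empty_mem, covJ_empty⟩, ?_⟩
  rintro V V' ⟨V₁, hV₁, V₂, hV₂, hcov⟩ hsub
  exact ⟨V' ∩ V₁, hS.2 hV₁ Set.inter_subset_right,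
    V' ∩ V₂, hT.2 hV₂ Set.inter_subset_right, hcov.inter_left hsub⟩

end CovJ

lemma IndepOn.mono {A : Type*} {N : ℕ} {J : Set (Fin N)} {V V' : Team A N}
    {f : (Fin N → A) → A} (hf : IndepOn J V f) (hsub : V' ⊆ V) : IndepOn J V' f :=
  fun a ha b hb => hf a (hsub ha) b (hsub hb)

lemma varAll_mono {A : Type*} {N : ℕ} (n : Fin N) : Monotone fun V : Team A N => varAll V n := by
  rintro V V' hsub c ⟨a, ha, b, rfl⟩
  exact ⟨a, hsub ha, b, rfl⟩

lemma varAll_empty {A : Type*} {N : ℕ} (n : Fin N) : varAll (∅ : Team A N) n = ∅ := by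
  simp [varAll]

section SuitPairs

variable {A : Type*} {N : ℕ}

lemma isSuitPair_zeroP : IsSuitPair (zeroP A N) := by
  rw [IsSuitPair, zeroP, ← Set.powerset_empty, ← Set.powerset_univ]
  exact ⟨isSuit_powerset _, isSuit_powerset _⟩

lemma isSuitPair_oneP : IsSuitPair (oneP A N) := by
  rw [IsSuitPair, oneP, ← Set.powerset_empty, ← Set.powerset_univ]
  exact ⟨isSuit_powerset _, isSuit_powerset _⟩

lemma isSuitPair_diagP (i j : Fin N) : IsSuitPair (diagP A i j) :=
  ⟨isSuit_powerset _, isSuit_powerset _⟩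

lemma IsSuitPair.negP {X : TPair A N} (hX : IsSuitPair X) : IsSuitPair (negP X) :=
  ⟨hX.2, hX.1⟩

lemma IsSuitPair.addJ (J : Set (Fin N)) {X Y : TPair A N} (hX : IsSuitPair X)
    (hY : IsSuitPair Y) : IsSuitPair (addJ J X Y) :=
  ⟨isSuit_setOf_covJ hX.1 hY.1, hX.2.inter hY.2⟩

lemma IsSuitPair.mulJ (J : Set (Fin N)) {X Y : TPair A N} (hX : IsSuitPair X)
    (hY : IsSuitPair Y) : IsSuitPair (mulJ J X Y) :=
  ⟨hX.1.inter hY.1, isSuit_setOf_covJ hX.2 hY.2⟩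

lemma IsSuitPair.cylJ (n : Fin N) (J : Set (Fin N)) {X : TPair A N} (hX : IsSuitPair X) :
    IsSuitPair (cylJ n J X) := by
  refine ⟨⟨?_, ?_⟩, hX.2.preimage (varAll_mono n) (varAll_empty n)⟩
  · -- `A` may be empty, but `n : Fin N` still yields some `f : (Fin N → A) → A`
    refine ⟨∅, fun a => a n, fun a ha => ha.elim, ?_⟩
    simpa [varF] using hX.1.empty_mem
  · rintro V V' ⟨f, hf, hmem⟩ hsub
    exact ⟨f, hf.mono hsub, hX.1.2 hmem (Set.image_mono hsub)⟩

end SuitPairs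

/-- The pairs of suits contain `0`, `1`, `D_ij` and are closed under
`¬`, `+_J`, `·_J`, and `C_{n,J}`. -/
theorem suitPairs_closed (A : Type*) (N : ℕ) :
    IsSuitPair (zeroP A N) ∧
    IsSuitPair (oneP A N) ∧
    (∀ i j : Fin N, IsSuitPair (diagP A i j)) ∧
    (∀ X : TPair A N, IsSuitPair X → IsSuitPair (negP X)) ∧
    (∀ (J : Set (Fin N)) (X Y : TPair A N),
      IsSuitPair X → IsSuitPair Y → IsSuitPair (addJ J X Y)) ∧
    (∀ (J : Set (Fin N)) (X Y : TPair A N),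
      IsSuitPair X → IsSuitPair Y → IsSuitPair (mulJ J X Y)) ∧
    (∀ (n : Fin N) (J : Set (Fin N)) (X : TPair A N),
      IsSuitPair X → IsSuitPair (cylJ n J X)) :=
  ⟨isSuitPair_zeroP, isSuitPair_oneP, isSuitPair_diagP, fun _ hX => hX.negP,
    fun J _ _ hX hY => hX.addJ J hY, fun J _ _ hX hY => hX.mulJ J hY,
    fun n J _ hX => hX.cylJ n J⟩
end

section
/- Let φ be a perfect IFG_N-formula over σ (every slash set occurring in φ is ∅) and 𝔄 a σ-structure with universe A. Then for every team V ⊆ ^N A, 𝔄 ⊨⁺ φ[V] if and only if 𝔄 ⊨⁺ φ[{a}] for every a ∈ V (perfect formulas are flat). -/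
open FirstOrder

/-- IFG_N-formulas over the signature `L`: atomic first-order formulas
(equalities and relations between terms in the variables `v_0, …, v_{N-1}`),
closed under `∼ψ`, `ψ₁ ∨_J ψ₂`, and `∃v_n/J ψ`. -/
inductive IFG (L : Language) (N : ℕ) : Type _
  | equal (t₁ t₂ : L.Term (Fin N)) : IFG L N
  | rel {k : ℕ} (R : L.Relations k) (ts : Fin k → L.Term (Fin N)) : IFG L N
  | not (φ : IFG L N) : IFG L N
  | or (J : Set (Fin N)) (φ₁ φ₂ : IFG L N) : IFG L N
  | ex (n : Fin N) (J : Set (Fin N)) (φ : IFG L N) : IFG L N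

/-- Hodges' trump semantics: `Sat A φ true V` means `𝔄 ⊨⁺ φ[V]` (`V` is a trump),
and `Sat A φ false W` means `𝔄 ⊨⁻ φ[W]` (`W` is a cotrump). -/
def Sat {L : Language} {N : ℕ} (A : Type*) [L.Structure A] :
    IFG L N → Bool → Team A N → Prop
  | .equal t₁ t₂, true, V => ∀ a ∈ V, t₁.realize a = t₂.realize a
  | .equal t₁ t₂, false, W => ∀ a ∈ W, t₁.realize a ≠ t₂.realize a
  | .rel R ts, true, V => ∀ a ∈ V, Language.Structure.RelMap R (fun i => (ts i).realize a)
  | .rel R ts, false, W => ∀ a ∈ W, ¬ Language.Structure.RelMap R (fun i => (ts i).realize a)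
  | .not φ, b, V => Sat A φ (!b) V
  | .or J φ₁ φ₂, true, V =>
      ∃ V₁ V₂, CovJ J V V₁ V₂ ∧ Sat A φ₁ true V₁ ∧ Sat A φ₂ true V₂
  | .or _ φ₁ φ₂, false, W => Sat A φ₁ false W ∧ Sat A φ₂ false W
  | .ex n J φ, true, V =>
      ∃ f : (Fin N → A) → A, IndepOn J V f ∧ Sat A φ true (varF V n f)
  | .ex n _ φ, false, W => Sat A φ false (varAll W n)

/-- The meaning `‖φ‖_𝔄 = ({V : 𝔄 ⊨⁺ φ[V]}, {W : 𝔄 ⊨⁻ φ[W]})`. -/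
def meaning {L : Language} {N : ℕ} (A : Type*) [L.Structure A] (φ : IFG L N) :
    TPair A N :=
  ({V | Sat A φ true V}, {W | Sat A φ false W})

/-- An IFG-formula is perfect if all of its slash sets are empty. -/
def IFG.Perfect {L : Language} {N : ℕ} : IFG L N → Prop
  | .equal _ _ => True
  | .rel _ _ => True
  | .not φ => φ.Perfect
  | .or J φ₁ φ₂ => J = ∅ ∧ φ₁.Perfect ∧ φ₂.Perfect
  | .ex _ J φ => J = ∅ ∧ φ.Perfect

/-- The perfection `φ_∅` of `φ`: replace every slash set by `∅`. -/
def IFG.perfection {L : Language} {N : ℕ} : IFG L N → IFG L N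
  | .equal t₁ t₂ => .equal t₁ t₂
  | .rel R ts => .rel R ts
  | .not φ => .not φ.perfection
  | .or _ φ₁ φ₂ => .or ∅ φ₁.perfection φ₂.perfection
  | .ex n _ φ => .ex n ∅ φ.perfection

/-! For a perfect formula, a team is a trump iff each of its valuations satisfies the formula in
the ordinary Tarskian sense, a condition that can be checked on singletons. With empty slash sets
every partition of a team is saturated and every choice function is uniform, so `∨` may split a
team valuation by valuation and `∃` may pick a witness for each valuation separately (the axiom of
choice assembles them into one function). -/

namespace IFG

variable {L : Language} {N : ℕ}

def Realize (A : Type*) [L.Structure A] : IFG L N → Bool → (Fin N → A) → Prop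
  | .equal t₁ t₂, true, a => t₁.realize a = t₂.realize a
  | .equal t₁ t₂, false, a => t₁.realize a ≠ t₂.realize a
  | .rel R ts, true, a => Language.Structure.RelMap R (fun i => (ts i).realize a)
  | .rel R ts, false, a => ¬ Language.Structure.RelMap R (fun i => (ts i).realize a)
  | .not φ, b, a => Realize A φ (!b) a
  | .or _ φ₁ φ₂, true, a => Realize A φ₁ true a ∨ Realize A φ₂ true a
  | .or _ φ₁ φ₂, false, a => Realize A φ₁ false a ∧ Realize A φ₂ false a
  | .ex n _ φ, true, a => ∃ b : A, Realize A φ true (Function.update a n b)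
  | .ex n _ φ, false, a => ∀ b : A, Realize A φ false (Function.update a n b)

end IFG

section Teams

variable {A : Type*} {N : ℕ}

theorem agreeOutside_empty_iff {a b : Fin N → A} : AgreeOutside ∅ a b ↔ a = b :=
  ⟨fun h => funext fun i => h i (Set.notMem_empty i), fun h _ _ => congrFun h _⟩

theorem covJ_empty_iff {V V₁ V₂ : Team A N} :
    CovJ ∅ V V₁ V₂ ↔ Disjoint V₁ V₂ ∧ V₁ ∪ V₂ = V := by
  simp only [CovJ, agreeOutside_empty_iff]
  constructor
  · exact fun h => ⟨h.1, h.2.1⟩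
  · rintro ⟨hdisj, hunion⟩
    exact ⟨hdisj, hunion, fun a ha _ _ hab => hab ▸ ha, fun a ha _ _ hab => hab ▸ ha⟩

theorem indepOn_empty (V : Team A N) (f : (Fin N → A) → A) : IndepOn ∅ V f :=
  fun _ _ _ _ hab => congrArg f (agreeOutside_empty_iff.mp hab)

theorem forall_mem_varAll_iff {V : Team A N} {n : Fin N} {p : (Fin N → A) → Prop} :
    (∀ c ∈ varAll V n, p c) ↔ ∀ a ∈ V, ∀ b : A, p (Function.update a n b) := by
  constructor
  · exact fun h a ha b => h _ ⟨a, ha, b, rfl⟩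
  · rintro h _ ⟨a, ha, b, rfl⟩
    exact h a ha b

end Teams

theorem Set.exists_disjoint_union_eq_forall_iff {α : Type*} {s : Set α} {p q : α → Prop} :
    (∃ s₁ s₂ : Set α, (Disjoint s₁ s₂ ∧ s₁ ∪ s₂ = s) ∧ (∀ a ∈ s₁, p a) ∧ ∀ a ∈ s₂, q a) ↔
      ∀ a ∈ s, p a ∨ q a := by
  constructor
  · rintro ⟨s₁, s₂, ⟨-, rfl⟩, hp, hq⟩ a (ha | ha)
    exacts [Or.inl (hp a ha), Or.inr (hq a ha)]
  · intro h
    refine ⟨{a ∈ s | p a}, s \ {a ∈ s | p a}, ⟨Set.disjoint_sdiff_right,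
      Set.union_sdiff_cancel (Set.sep_subset _ _)⟩, fun a ha => ha.2, fun a ha => ?_⟩
    exact (h a ha.1).resolve_left fun hpa => ha.2 ⟨ha.1, hpa⟩

theorem Set.exists_fun_forall_mem_iff {α β : Type*} {s : Set α} {p : α → β → Prop}
    (hβ : α → Nonempty β) :
    (∃ f : α → β, ∀ a ∈ s, p a (f a)) ↔ ∀ a ∈ s, ∃ b, p a b := by
  constructor
  · exact fun ⟨f, hf⟩ a ha => ⟨f a, hf a ha⟩
  · intro h
    have hskolem : ∀ a, ∃ b, a ∈ s → p a b := fun a => by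
      by_cases ha : a ∈ s
      · exact (h a ha).imp fun _ hb _ => hb
      · exact (hβ a).elim fun b => ⟨b, fun ha' => (ha ha').elim⟩
    obtain ⟨f, hf⟩ := Classical.skolem.mp hskolem
    exact ⟨f, fun a ha => hf a ha⟩

theorem IFG.sat_iff_forall_realize {L : Language} {N : ℕ} (A : Type*) [L.Structure A]
    {φ : IFG L N} (hφ : φ.Perfect) (b : Bool) (V : Team A N) :
    Sat A φ b V ↔ ∀ a ∈ V, φ.Realize A b a := by
  induction φ generalizing b V with
  | equal | rel => cases b <;> rfl
  | not φ ih => exact ih hφ (!b) V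
  | or J φ₁ φ₂ ih₁ ih₂ =>
    obtain ⟨rfl, h₁, h₂⟩ := hφ
    cases b
    · simp only [Sat, Realize, ih₁ h₁, ih₂ h₂, forall₂_and]
    · simp only [Sat, Realize, ih₁ h₁, ih₂ h₂, covJ_empty_iff]
      exact Set.exists_disjoint_union_eq_forall_iff
  | ex n J φ ih =>
    obtain ⟨rfl, hφ⟩ := hφ
    cases b
    · simp only [Sat, Realize, ih hφ, forall_mem_varAll_iff]
    · simp only [Sat, Realize, ih hφ, indepOn_empty, true_and, varF, Set.forall_mem_image]
      exact Set.exists_fun_forall_mem_iff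
        (p := fun a b => φ.Realize A true (Function.update a n b)) fun a => ⟨a n⟩

/-- Perfect IFG-formulas are flat: `𝔄 ⊨⁺ φ[V]` iff `𝔄 ⊨⁺ φ[{a}]` for all `a ∈ V`. -/
theorem perfect_flat_pos {L : Language} {N : ℕ} (A : Type*) [L.Structure A]
    (φ : IFG L N) (hφ : φ.Perfect) (V : Team A N) :
    Sat A φ true V ↔ ∀ a ∈ V, Sat A φ true {a} := by
  simp only [IFG.sat_iff_forall_realize A hφ, Set.mem_singleton_iff, forall_eq]
end
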